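/- arXiv:1107.4876 — 2 statements merged into one kernel-verified Lean document; each statement's English description precedes it below -/
import Mathlib

section
/- Let f(z) = λz + a_2 z² + a_3 z³ + ⋯ be a formal power series over ℂ with λ not equal to 0 and not a root of unity, and with no resonances in the one-dimensional sense (λ^k ≠ λ for all k ≥ 2). Then there exists a unique formal power series φ(z) = z + c_2 z² + c_3 z³ + ⋯ such that φ(f(z)) = λ φ(z) as formal power series. (Formal linearizability of one-dimensional germs with multiplier not a root of unity.) -/
/-!
The coefficient of `zⁿ` in `φ ∘ f` is `∑_{k≤n} cₖ [zⁿ] fᵏ`, and `[zⁿ] fⁿ = λⁿ` because `f` has no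
constant term. So the coefficient of `zⁿ` in `φ ∘ f = λ φ` reads
`cₙ (λ - λⁿ) = ∑_{k<n} cₖ [zⁿ] fᵏ`. For `n ≥ 2` the factor `λ - λⁿ` is nonzero, so `cₙ` is
determined by the lower coefficients, starting from `c₀ = 0`, `c₁ = 1`; solving this recursion
gives existence and uniqueness at once.
-/

open PowerSeries

/-- Composition `φ ∘ f` of one-variable formal power series (for `f` without constant
term), defined coefficientwise via truncation of `φ` and evaluation at `f`. -/
noncomputable def psComp (φ f : PowerSeries ℂ) : PowerSeries ℂ :=
  PowerSeries.mk fun n =>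
    PowerSeries.coeff n (Polynomial.aeval f (PowerSeries.trunc (n + 1) φ))

open Finset

theorem PowerSeries.coeff_pow_self_of_constantCoeff_eq_zero {R : Type*} [CommSemiring R]
    {f : R⟦X⟧} (hf : constantCoeff f = 0) (n : ℕ) : coeff n (f ^ n) = coeff 1 f ^ n := by
  obtain ⟨g, rfl⟩ := X_dvd_iff.mpr hf
  have hg : coeff 1 (X * g) = constantCoeff g := by simp
  simpa [hg, mul_pow] using coeff_X_pow_mul (g ^ n) n 0

theorem coeff_psComp (φ f : PowerSeries ℂ) (n : ℕ) :
    coeff n (psComp φ f) = ∑ k ∈ range (n + 1), coeff k φ * coeff n (f ^ k) := by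
  have hdeg : (trunc (n + 1) φ).natDegree < n + 1 := by
    rcases eq_or_ne (trunc (n + 1) φ) 0 with h | h
    · simp [h]
    · exact (Polynomial.natDegree_lt_iff_degree_lt h).mpr (degree_trunc_lt φ (n + 1))
  rw [psComp, coeff_mk, Polynomial.aeval_eq_sum_range' hdeg, map_sum]
  refine sum_congr rfl fun k hk => ?_
  simp [coeff_trunc, Nat.lt_succ_iff.mp (mem_range.mp hk)]

theorem coeff_psComp_eq_smul_iff {f : PowerSeries ℂ} {l : ℂ} (hf0 : constantCoeff f = 0)
    (hf1 : coeff 1 f = l) (φ : PowerSeries ℂ) (n : ℕ) :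
    coeff n (psComp φ f) = coeff n (l • φ) ↔
      coeff n φ * (l - l ^ n) = ∑ k ∈ range n, coeff k φ * coeff n (f ^ k) := by
  rw [coeff_psComp, sum_range_succ, coeff_pow_self_of_constantCoeff_eq_zero hf0, hf1,
    coeff_smul, smul_eq_mul]
  constructor <;> intro h <;> linear_combination -h

noncomputable def linearizingCoeff (f : PowerSeries ℂ) (l : ℂ) : ℕ → ℂ
  | 0 => 0
  | 1 => 1
  | n + 2 => (∑ k : Fin (n + 2), linearizingCoeff f l k * coeff (n + 2) (f ^ (k : ℕ))) /
      (l - l ^ (n + 2))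

theorem linearizingCoeff_add_two (f : PowerSeries ℂ) (l : ℂ) (n : ℕ) :
    linearizingCoeff f l (n + 2) = (∑ k ∈ range (n + 2),
      linearizingCoeff f l k * coeff (n + 2) (f ^ k)) / (l - l ^ (n + 2)) := by
  rw [linearizingCoeff, Fin.sum_univ_eq_sum_range (fun k => linearizingCoeff f l k *
    coeff (n + 2) (f ^ k))]

section

variable {f : PowerSeries ℂ} {l : ℂ}

theorem sub_pow_ne_zero_of_nonresonant (hres : ∀ k : ℕ, 2 ≤ k → l ^ k ≠ l) (n : ℕ) :
    l - l ^ (n + 2) ≠ 0 :=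
  sub_ne_zero.mpr (hres (n + 2) (by omega)).symm

theorem psComp_mk_linearizingCoeff (hf0 : constantCoeff f = 0) (hf1 : coeff 1 f = l)
    (hres : ∀ k : ℕ, 2 ≤ k → l ^ k ≠ l) :
    psComp (mk (linearizingCoeff f l)) f = l • mk (linearizingCoeff f l) := by
  ext n
  rw [coeff_psComp_eq_smul_iff hf0 hf1]
  simp only [coeff_mk]
  match n with
  | 0 => simp [linearizingCoeff]
  | 1 => simp [linearizingCoeff]
  | n + 2 =>
    rw [linearizingCoeff_add_two]
    exact div_mul_cancel₀ _ (sub_pow_ne_zero_of_nonresonant hres n)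

theorem coeff_eq_linearizingCoeff (hf0 : constantCoeff f = 0) (hf1 : coeff 1 f = l)
    (hres : ∀ k : ℕ, 2 ≤ k → l ^ k ≠ l) {φ : PowerSeries ℂ} (h0 : constantCoeff φ = 0)
    (h1 : coeff 1 φ = 1) (hφ : psComp φ f = l • φ) (n : ℕ) :
    coeff n φ = linearizingCoeff f l n := by
  induction n using Nat.strong_induction_on with
  | _ n ih =>
    match n with
    | 0 => simpa [linearizingCoeff] using h0
    | 1 => simpa [linearizingCoeff] using h1
    | n + 2 =>
      have hn := (coeff_psComp_eq_smul_iff hf0 hf1 φ (n + 2)).mp (by rw [hφ])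
      rw [sum_congr rfl fun k hk => by rw [ih k (mem_range.mp hk)]] at hn
      rw [linearizingCoeff_add_two, ← hn,
        mul_div_cancel_right₀ _ (sub_pow_ne_zero_of_nonresonant hres n)]

end

theorem formal_linearization_exists_unique_general (f : PowerSeries ℂ) (l : ℂ)
    (hf0 : PowerSeries.constantCoeff f = 0) (hf1 : PowerSeries.coeff 1 f = l)
    (hres : ∀ k : ℕ, 2 ≤ k → l ^ k ≠ l) :
    ∃! φ : PowerSeries ℂ, PowerSeries.constantCoeff φ = 0 ∧
      PowerSeries.coeff 1 φ = 1 ∧ psComp φ f = l • φ := by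
  refine ⟨mk (linearizingCoeff f l), ⟨?_, ?_, psComp_mk_linearizingCoeff hf0 hf1 hres⟩, ?_⟩
  · simp [← coeff_zero_eq_constantCoeff_apply, linearizingCoeff]
  · simp [linearizingCoeff]
  · rintro φ ⟨h0, h1, hφ⟩
    ext n
    rw [coeff_mk, coeff_eq_linearizingCoeff hf0 hf1 hres h0 h1 hφ n]

/-- If `f(z) = λz + a₂z² + ⋯` is a formal power series with `λ ≠ 0` and `λ^k ≠ λ` for
all `k ≥ 2` (no one-dimensional resonances), then there is a unique formal power series
`φ(z) = z + c₂z² + ⋯` with `φ ∘ f = λ·φ`. -/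
theorem formal_linearization_exists_unique (f : PowerSeries ℂ) (l : ℂ)
    (hf0 : PowerSeries.constantCoeff f = 0) (hf1 : PowerSeries.coeff 1 f = l)
    (hl0 : l ≠ 0) (hres : ∀ k : ℕ, 2 ≤ k → l ^ k ≠ l) :
    ∃! φ : PowerSeries ℂ, PowerSeries.constantCoeff φ = 0 ∧
      PowerSeries.coeff 1 φ = 1 ∧ psComp φ f = l • φ :=
  formal_linearization_exists_unique_general f l hf0 hf1 hres
end

section
/- Let λ₁, …, λ_n ∈ ℂ* and suppose the n-tuple (λ₁,…,λ_n) has no resonances, i.e., for all multi-indices (k₁,…,k_n) ∈ ℕ^n with k₁+⋯+k_n ≥ 2 and all 1 ≤ j ≤ n, λ₁^{k₁}⋯λ_n^{k_n} ≠ λ_j. Then any formal germ f: (ℂ^n,0) → (ℂ^n,0) with diagonal linear part diag(λ₁,…,λ_n) is formally linearizable: there exists a formal power series map φ with identity linear part such that φ∘f = (dφ₀-linear map)∘φ where the linear map is diag(λ₁,…,λ_n). -/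
/-- Composition `φ ∘ f` of a multivariate formal power series `φ` with an `n`-tuple `f`
of power series without constant term, defined coefficientwise via truncation. -/
noncomputable def germComp {n : ℕ} (φ : MvPowerSeries (Fin n) ℂ)
    (f : Fin n → MvPowerSeries (Fin n) ℂ) : MvPowerSeries (Fin n) ℂ :=
  fun d => MvPowerSeries.coeff (R := ℂ) d
    (MvPolynomial.aeval f
      (MvPowerSeries.trunc ℂ (Finsupp.equivFunOnFinite.symm fun _ => d.sum (fun _ v => v) + 1) φ))

/-!
Write `φ_j = X_j + (higher order terms)`. Because each `f_i` has no constant term and linear part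
`λ_i X_i`, the product `f^m = ∏ f_i^{m_i}` is `λ^m X^m` plus terms of degree `> |m|`. Hence the
coefficient of `X^d` in `φ_j ∘ f` is `λ^d φ_{j,d}` plus an expression in the coefficients
`φ_{j,m}` with `|m| < |d|`, and `φ_j ∘ f = λ_j φ_j` becomes
`(λ_j - λ^d) φ_{j,d} = (lower order terms)`. Absence of resonances makes `λ_j - λ^d` nonzero
for `|d| ≥ 2`, so this determines `φ_j` by recursion on `|d|`.
-/

open Finsupp

theorem Finsupp.exists_eq_single_of_degree_eq_one {σ : Type*} {d : σ →₀ ℕ}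
    (h : d.degree = 1) : ∃ i, d = single i 1 := by
  classical
  obtain ⟨i, hi⟩ := Multiset.card_eq_one.mp ((card_toMultiset d).trans h)
  exact ⟨i, by rw [← toMultiset_toFinsupp d, hi, Multiset.toFinsupp_singleton]⟩

namespace MvPowerSeries

variable {σ R : Type*} [CommSemiring R]

theorem homogeneousComponent_zero_one : homogeneousComponent 0 (1 : MvPowerSeries σ R) = 1 := by
  classical
  ext d
  rw [coeff_homogeneousComponent, coeff_one]
  split_ifs with h0 h1 h1 <;> simp_all [degree_eq_zero_iff]

theorem homogeneousComponent_prod_of_le_order {ι : Type*} (s : Finset ι)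
    (g : ι → MvPowerSeries σ R) (p : ι → ℕ) (h : ∀ i ∈ s, p i ≤ (g i).order) :
    homogeneousComponent (∑ i ∈ s, p i) (∏ i ∈ s, g i) =
      ∏ i ∈ s, homogeneousComponent (p i) (g i) := by
  classical
  induction s using Finset.induction_on with
  | empty => exact homogeneousComponent_zero_one
  | insert a s ha ih =>
    have hs : ((∑ i ∈ s, p i : ℕ) : ℕ∞) ≤ (∏ i ∈ s, g i).order := by
      rw [Nat.cast_sum]
      exact (Finset.sum_le_sum fun i hi => h i (Finset.mem_insert_of_mem hi)).trans
        (le_order_prod g s)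
    rw [Finset.sum_insert ha, Finset.prod_insert ha, Finset.prod_insert ha,
      homogeneousComponent_mul_of_le_order (h a (Finset.mem_insert_self a s)) hs,
      ih fun i hi => h i (Finset.mem_insert_of_mem hi)]

theorem homogeneousComponent_pow_of_le_order {g : MvPowerSeries σ R} {p : ℕ} (h : p ≤ g.order)
    (k : ℕ) : homogeneousComponent (k * p) (g ^ k) = homogeneousComponent p g ^ k := by
  simpa using homogeneousComponent_prod_of_le_order (Finset.range k) (fun _ => g) (fun _ => p)
    fun _ _ => h

variable {f : σ → MvPowerSeries σ R}

theorem degree_le_order_finsuppProd_pow (hf : ∀ i, constantCoeff (f i) = 0) (m : σ →₀ ℕ) :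
    (m.degree : ℕ∞) ≤ (m.prod fun i k => f i ^ k).order := by
  rw [degree_apply, Nat.cast_sum]
  exact (Finset.sum_le_sum fun i _ => le_order_pow_of_constantCoeff_eq_zero _ (hf i)).trans
    (le_order_prod _ _)

variable {l : σ → R}

theorem homogeneousComponent_finsuppProd_pow (hf : ∀ i, constantCoeff (f i) = 0)
    (hl : ∀ i, homogeneousComponent 1 (f i) = l i • X i) (m : σ →₀ ℕ) :
    homogeneousComponent m.degree (m.prod fun i k => f i ^ k) =
      monomial m (m.prod fun i k => l i ^ k) := by
  rw [monomial_eq, degree_apply, Finsupp.prod, Finsupp.prod,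
    homogeneousComponent_prod_of_le_order _ _ _
      fun i _ => le_order_pow_of_constantCoeff_eq_zero _ (hf i)]
  refine Finset.prod_congr rfl fun i _ => ?_
  have h1 : (1 : ℕ∞) ≤ (f i).order := (one_le_order_iff_constCoeff_eq_zero).mpr (hf i)
  simpa [hl i] using homogeneousComponent_pow_of_le_order h1 (m i)

theorem coeff_finsuppProd_pow_of_degree_le [DecidableEq σ] (hf : ∀ i, constantCoeff (f i) = 0)
    (hl : ∀ i, homogeneousComponent 1 (f i) = l i • X i) {d m : σ →₀ ℕ}
    (hdm : d.degree ≤ m.degree) :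
    coeff d (m.prod fun i k => f i ^ k) = if d = m then m.prod fun i k => l i ^ k else 0 := by
  rcases hdm.lt_or_eq with hlt | heq
  · rw [if_neg (by rintro rfl; exact hlt.false), coeff_of_lt_order
      ((Nat.cast_lt.mpr hlt).trans_le (degree_le_order_finsuppProd_pow hf m))]
  · have := congrArg (coeff d) (homogeneousComponent_finsuppProd_pow hf hl m)
    rwa [coeff_homogeneousComponent, if_pos heq, coeff_monomial] at this

theorem homogeneousComponent_one_eq_smul_X {g : MvPowerSeries σ R} {j : σ} {a : R}
    [DecidableEq σ] (h : ∀ i, coeff (single i 1) g = if i = j then a else 0) :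
    homogeneousComponent 1 g = a • X j := by
  ext d
  rw [coeff_homogeneousComponent, coeff_smul, coeff_X]
  split_ifs with hd hdj hdj
  · rw [hdj, h, if_pos rfl, mul_one]
  · obtain ⟨i, rfl⟩ := exists_eq_single_of_degree_eq_one hd
    rw [h, if_neg (by rintro rfl; exact hdj rfl), mul_zero]
  · exact absurd (by rw [hdj, degree_single]) hd
  · rw [mul_zero]

end MvPowerSeries

open MvPowerSeries

section Composition

variable {n : ℕ}

noncomputable def germCompIndices (d : Fin n →₀ ℕ) : Finset (Fin n →₀ ℕ) :=
  Finset.Iio (equivFunOnFinite.symm fun _ => d.degree + 1)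

-- For `n = 0` the index set is `Iio 0 = ∅`.
theorem mem_germCompIndices_of_degree_le [NeZero n] {d m : Fin n →₀ ℕ}
    (h : m.degree ≤ d.degree) : m ∈ germCompIndices d := by
  rw [germCompIndices, Finset.mem_Iio, lt_iff_le_and_ne]
  refine ⟨fun i => by simpa using ((le_degree i m).trans h).trans (Nat.le_succ _),
    fun heq => ?_⟩
  have h0 := (le_degree 0 m).trans h
  simp [heq] at h0

theorem coeff_germComp (φ : MvPowerSeries (Fin n) ℂ) (f : Fin n → MvPowerSeries (Fin n) ℂ)
    (d : Fin n →₀ ℕ) :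
    coeff d (germComp φ f) =
      ∑ m ∈ germCompIndices d, coeff m φ * coeff d (m.prod fun i k => f i ^ k) := by
  rw [coeff_apply, germComp, MvPowerSeries.trunc, truncFinset_apply, map_sum, map_sum]
  refine Finset.sum_congr rfl fun m _ => ?_
  rw [MvPolynomial.aeval_monomial, MvPowerSeries.algebraMap_apply, Algebra.algebraMap_self,
    RingHom.id_apply, coeff_C_mul]

theorem coeff_germComp_eq_sum_lower_add [NeZero n] {l : Fin n → ℂ}
    {f : Fin n → MvPowerSeries (Fin n) ℂ} (hf : ∀ i, constantCoeff (f i) = 0)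
    (hl : ∀ i, homogeneousComponent 1 (f i) = l i • X i) (φ : MvPowerSeries (Fin n) ℂ)
    (d : Fin n →₀ ℕ) :
    coeff d (germComp φ f) =
      ∑ m ∈ (germCompIndices d).filter (·.degree < d.degree),
        coeff m φ * coeff d (m.prod fun i k => f i ^ k) +
      (d.prod fun i k => l i ^ k) * coeff d φ := by
  rw [coeff_germComp, ← Finset.sum_filter_add_sum_filter_not _ (·.degree < d.degree)]
  congr 1
  rw [Finset.sum_eq_single_of_mem d
      (Finset.mem_filter.2 ⟨mem_germCompIndices_of_degree_le le_rfl, lt_irrefl _⟩),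
    coeff_finsuppProd_pow_of_degree_le hf hl le_rfl, if_pos rfl, mul_comm (coeff d φ)]
  intro m hm hmd
  rw [coeff_finsuppProd_pow_of_degree_le hf hl (not_lt.1 (Finset.mem_filter.1 hm).2),
    if_neg (Ne.symm hmd), mul_zero]

end Composition

section Linearization

variable {n : ℕ} (l : Fin n → ℂ) (f : Fin n → MvPowerSeries (Fin n) ℂ) (j : Fin n)

/-- The coefficient at `X^d`, `|d| ≥ 2`, solves the degree-`d` part
`(λ_j - λ^d) φ_d = ∑_{|m| < |d|} φ_m [X^d] f^m` of the equation `φ ∘ f = λ_j φ`. -/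
noncomputable def linearizingSeries : MvPowerSeries (Fin n) ℂ
  | d =>
    if 2 ≤ d.degree then
      (∑ m ∈ ((germCompIndices d).filter (·.degree < d.degree)).attach,
        linearizingSeries m.1 * coeff d (m.1.prod fun i k => f i ^ k)) /
        (l j - d.prod fun i k => l i ^ k)
    else if d = single j 1 then 1 else 0
termination_by d => d.degree
decreasing_by exact (Finset.mem_filter.mp m.2).2

theorem coeff_linearizingSeries_of_two_le_degree {d : Fin n →₀ ℕ} (hd : 2 ≤ d.degree) :
    coeff d (linearizingSeries l f j) =
      (∑ m ∈ (germCompIndices d).filter (·.degree < d.degree),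
        coeff m (linearizingSeries l f j) * coeff d (m.prod fun i k => f i ^ k)) /
        (l j - d.prod fun i k => l i ^ k) := by
  rw [coeff_apply, linearizingSeries, if_pos hd]
  exact congrArg (· / _) (Finset.sum_attach _
    fun m => coeff m (linearizingSeries l f j) * coeff d (m.prod fun i k => f i ^ k))

theorem coeff_linearizingSeries_of_degree_lt_two {d : Fin n →₀ ℕ} (hd : d.degree < 2) :
    coeff d (linearizingSeries l f j) = if d = single j 1 then 1 else 0 := by
  rw [coeff_apply, linearizingSeries, if_neg hd.not_ge]

theorem constantCoeff_linearizingSeries : constantCoeff (linearizingSeries l f j) = 0 := by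
  rw [← coeff_zero_eq_constantCoeff_apply,
    coeff_linearizingSeries_of_degree_lt_two l f j (by simp),
    if_neg (single_ne_zero.2 one_ne_zero).symm]

theorem coeff_germComp_linearizingSeries (hf : ∀ i, constantCoeff (f i) = 0)
    (hl : ∀ i, homogeneousComponent 1 (f i) = l i • X i)
    (hres : ∀ d : Fin n →₀ ℕ, 2 ≤ d.degree → (d.prod fun i k => l i ^ k) ≠ l j)
    (d : Fin n →₀ ℕ) :
    coeff d (germComp (linearizingSeries l f j) f) = l j * coeff d (linearizingSeries l f j) := by
  have : NeZero n := ⟨j.pos.ne'⟩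
  set φ := linearizingSeries l f j
  rw [coeff_germComp_eq_sum_lower_add hf hl]
  rcases le_or_gt 2 d.degree with hd | hd
  · have hne : l j - d.prod (fun i k => l i ^ k) ≠ 0 := sub_ne_zero.2 (hres d hd).symm
    rw [coeff_linearizingSeries_of_two_le_degree l f j hd]
    field_simp
    ring
  · have low : ∑ m ∈ (germCompIndices d).filter (·.degree < d.degree),
        coeff m φ * coeff d (m.prod fun i k => f i ^ k) = 0 := by
      refine Finset.sum_eq_zero fun m hm => ?_
      have hm0 : m = 0 := (degree_eq_zero_iff m).1 (by have := (Finset.mem_filter.1 hm).2; omega)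
      rw [hm0, coeff_zero_eq_constantCoeff_apply, constantCoeff_linearizingSeries, zero_mul]
    rw [low, zero_add, coeff_linearizingSeries_of_degree_lt_two l f j hd]
    split_ifs with hdj
    · rw [hdj, prod_single_index (h := fun i k => l i ^ k) (pow_zero _), pow_one]
    · rw [mul_zero, mul_zero]

end Linearization

theorem formal_linearization_no_resonances_general {n : ℕ} (l : Fin n → ℂ)
    (hres : ∀ k : Fin n →₀ ℕ, 2 ≤ k.sum (fun _ v => v) →
      ∀ j : Fin n, (∏ i : Fin n, l i ^ k i) ≠ l j)
    (f : Fin n → MvPowerSeries (Fin n) ℂ)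
    (hf0 : ∀ j, MvPowerSeries.constantCoeff (σ := Fin n) (R := ℂ) (f j) = 0)
    (hflin : ∀ i j : Fin n, MvPowerSeries.coeff (R := ℂ) (Finsupp.single i 1) (f j)
      = if i = j then l j else 0) :
    ∃ φ : Fin n → MvPowerSeries (Fin n) ℂ,
      (∀ j, MvPowerSeries.constantCoeff (σ := Fin n) (R := ℂ) (φ j) = 0) ∧
      (∀ i j : Fin n, MvPowerSeries.coeff (R := ℂ) (Finsupp.single i 1) (φ j)
        = if i = j then 1 else 0) ∧
      (∀ j, germComp (φ j) f = l j • φ j) := by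
  have hl (j : Fin n) : homogeneousComponent 1 (f j) = l j • X j :=
    homogeneousComponent_one_eq_smul_X fun i => hflin i j
  have hnonres (j : Fin n) (d : Fin n →₀ ℕ) (hd : 2 ≤ d.degree) :
      (d.prod fun i k => l i ^ k) ≠ l j := by
    rw [prod_fintype _ _ fun i => pow_zero (l i)]
    exact hres d hd j
  refine ⟨linearizingSeries l f, fun j => ?_, fun i j => ?_, fun j => ?_⟩
  · exact constantCoeff_linearizingSeries l f j
  · rw [coeff_linearizingSeries_of_degree_lt_two l f j (by simp)]
    exact if_congr (single_left_inj one_ne_zero) rfl rfl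
  · ext d
    rw [coeff_germComp_linearizingSeries l f j hf0 hl (hnonres j), coeff_smul]

/-- If `(λ₁,…,λ_n) ∈ (ℂ*)ⁿ` has no resonances then every formal germ
`f : (ℂⁿ,0) → (ℂⁿ,0)` with diagonal linear part `diag(λ₁,…,λ_n)` is formally
linearizable: there is a formal map `φ` with identity linear part conjugating `f` to
its linear part, `φ ∘ f = diag(λ₁,…,λ_n) ∘ φ`. -/
theorem formal_linearization_no_resonances {n : ℕ} (l : Fin n → ℂ)
    (hl0 : ∀ j, l j ≠ 0)
    (hres : ∀ k : Fin n →₀ ℕ, 2 ≤ k.sum (fun _ v => v) →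
      ∀ j : Fin n, (∏ i : Fin n, l i ^ k i) ≠ l j)
    (f : Fin n → MvPowerSeries (Fin n) ℂ)
    (hf0 : ∀ j, MvPowerSeries.constantCoeff (σ := Fin n) (R := ℂ) (f j) = 0)
    (hflin : ∀ i j : Fin n, MvPowerSeries.coeff (R := ℂ) (Finsupp.single i 1) (f j)
      = if i = j then l j else 0) :
    ∃ φ : Fin n → MvPowerSeries (Fin n) ℂ,
      (∀ j, MvPowerSeries.constantCoeff (σ := Fin n) (R := ℂ) (φ j) = 0) ∧
      (∀ i j : Fin n, MvPowerSeries.coeff (R := ℂ) (Finsupp.single i 1) (φ j)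
        = if i = j then 1 else 0) ∧
      (∀ j, germComp (φ j) f = l j • φ j) :=
  formal_linearization_no_resonances_general l hres f hf0 hflin
end
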